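/- (Case II of Claim F) Let δ satisfy 5/8 < δ < 3/4 and set d = 2(1−δ). Let α = (3 − √5)/2 and let T : [0,1] → [0,1] be the rotation T(t) = t + α for t ∈ [0, 1−α), T(t) = t + α − 1 for t ∈ [1−α, 1]. Suppose u : [0,1] → [0,1] is continuous, nondecreasing and surjective, satisfies u ∘ g = T ∘ u, and u(t) = 1 − α if and only if t = d. Then for every interval J ⊆ [0,1] such that u(J) has positive length, there exists an integer k ≥ 0 with d ∈ g^k(J). -/

import Mathlib

/-- The piecewise-affine map `g : [0,1] → [0,1]`:
`g(t) = t/2 + δ` on `[0, 2(1−δ))` and `g(t) = t/2 + δ − 1` on `[2(1−δ), 1]`. -/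
noncomputable def gMap (δ : ℝ) (t : ℝ) : ℝ :=
  if t < 2 * (1 - δ) then t / 2 + δ else t / 2 + δ - 1

/-- `α = (3 − √5)/2`. -/
noncomputable def alphaRot : ℝ := (3 - Real.sqrt 5) / 2

/-- The rotation `T : [0,1] → [0,1]` by `α`:
`T(t) = t + α` on `[0, 1−α)` and `T(t) = t + α − 1` on `[1−α, 1]`. -/
noncomputable def Tmap (t : ℝ) : ℝ :=
  if t < 1 - alphaRot then t + alphaRot else t + alphaRot - 1

/-! The semiconjugacy `u ∘ g = T ∘ u` transports orbits of `g` to orbits of the rotation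
`T (fract x) = fract (x + α)`. Since `1 - α` is irrational, Dirichlet's approximation theorem
makes the fractional parts of the positive multiples of `1 - α` dense, so some
`y = fract ((k + 1) (1 - α))` lies strictly between two values of `u` on `J`, and by the
intermediate value theorem `y = u s` with `s ∈ J`. Then
`u (g^k s) = T^k y = fract (1 - α + k) = 1 - α`, which forces `g^k s = d`. -/

open Set

lemma alphaRot_pos : 0 < alphaRot := by
  have : Real.sqrt 5 < 3 := by
    rw [Real.sqrt_lt' (by norm_num)]; norm_num
  unfold alphaRot; linarith

lemma alphaRot_lt_one : alphaRot < 1 := by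
  have : 1 < Real.sqrt 5 := by
    rw [Real.lt_sqrt (by norm_num)]; norm_num
  unfold alphaRot; linarith

lemma irrational_one_sub_alphaRot : Irrational (1 - alphaRot) := by
  have h5 : Irrational (Real.sqrt 5) := by
    simpa using Nat.prime_five.irrational_sqrt
  have : 1 - alphaRot = (Real.sqrt 5 - (1 : ℕ)) / (2 : ℕ) := by
    unfold alphaRot; push_cast; ring
  rw [this]
  exact (h5.sub_natCast 1).div_natCast two_ne_zero

lemma exists_pos_nat_mul_mem_Ioo {ε a b : ℝ} (hε : 0 < ε) (ha : 0 ≤ a) (hεab : ε < b - a) :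
    ∃ i : ℕ, 0 < i ∧ i * ε ∈ Ioo a b := by
  refine ⟨⌊a / ε⌋₊ + 1, Nat.succ_pos _, ?_, ?_⟩
  · have := Nat.lt_floor_add_one (a / ε)
    push_cast
    rwa [div_lt_iff₀ hε] at this
  · have := Nat.floor_le (div_nonneg ha hε.le)
    push_cast
    rw [le_div_iff₀ hε] at this
    nlinarith

lemma Irrational.exists_pos_nat_fract_mul_mem_Ioo {ξ a b : ℝ} (hξ : Irrational ξ)
    (ha : 0 ≤ a) (hab : a < b) (hb : b ≤ 1) :
    ∃ n : ℕ, 0 < n ∧ Int.fract (n * ξ) ∈ Ioo a b := by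
  obtain ⟨N, hN⟩ := exists_nat_one_div_lt (sub_pos.2 hab)
  obtain ⟨k, hk, -, hkξ⟩ := Real.exists_nat_abs_mul_sub_round_le ξ N.succ_pos
  -- `ε ≡ k ξ` mod 1 is a nonzero step shorter than `b - a`,
  -- so the multiples of `±ε` walk into `(a, b)`.
  set ε := k * ξ - round (k * ξ)
  have hε : |ε| < b - a := hkξ.trans_lt <| lt_of_le_of_lt
    (one_div_le_one_div_of_le (by positivity) (by push_cast; linarith)) hN
  have hε0 : ε ≠ 0 := sub_ne_zero.2 ((hξ.natCast_mul hk.ne').ne_int _)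
  rcases hε0.lt_or_gt with hneg | hpos
  · obtain ⟨i, hi, hia, hib⟩ :=
      exists_pos_nat_mul_mem_Ioo (b := 1 - a) (neg_pos.2 hneg) (sub_nonneg.2 hb)
        (by rw [abs_of_neg hneg] at hε; linarith)
    refine ⟨i * k, by positivity, ?_⟩
    rw [show Int.fract ((i * k : ℕ) * ξ) = 1 + i * ε from Int.fract_eq_iff.2
      ⟨by linarith, by linarith, i * round (k * ξ) - 1, by push_cast; ring⟩]
    constructor <;> linarith
  · obtain ⟨i, hi, hia, hib⟩ :=
      exists_pos_nat_mul_mem_Ioo (b := b) hpos ha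
        (by rw [abs_of_pos hpos] at hε; linarith)
    refine ⟨i * k, by positivity, ?_⟩
    rw [show Int.fract ((i * k : ℕ) * ξ) = i * ε from Int.fract_eq_iff.2
      ⟨by linarith, by linarith, i * round (k * ξ), by push_cast; ring⟩]
    exact ⟨hia, hib⟩

lemma mapsTo_gMap {δ : ℝ} (h0 : 0 ≤ δ) (h1 : δ ≤ 3 / 2) :
    MapsTo (gMap δ) (Icc 0 1) (Icc 0 1) := by
  intro t ⟨ht0, ht1⟩
  unfold gMap
  split_ifs with h
  · constructor <;> linarith
  · constructor <;> linarith

lemma Tmap_fract (x : ℝ) : Tmap (Int.fract x) = Int.fract (x + alphaRot) := by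
  have h0 := Int.fract_nonneg x
  have h1 := Int.fract_lt_one x
  have hx := Int.self_sub_fract x
  unfold Tmap
  split_ifs with h
  · exact (Int.fract_eq_iff.2
      ⟨by linarith [alphaRot_pos], by linarith, ⌊x⌋, by linarith⟩).symm
  · exact (Int.fract_eq_iff.2 ⟨by linarith, by linarith [alphaRot_lt_one], ⌊x⌋ + 1,
      by push_cast; linarith⟩).symm

lemma Tmap_iterate_fract (x : ℝ) (k : ℕ) :
    Tmap^[k] (Int.fract x) = Int.fract (x + k * alphaRot) := by
  induction k with
  | zero => simp
  | succ k ih => rw [Function.iterate_succ_apply', ih, Tmap_fract]; push_cast; ring_nf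

lemma iterate_apply_of_semiconjOn {α β : Type*} {f : α → α} {g : β → β} {u : α → β}
    {s : Set α} (hf : MapsTo f s s) (h : ∀ x ∈ s, u (f x) = g (u x)) (k : ℕ) {x : α}
    (hx : x ∈ s) :
    u (f^[k] x) = g^[k] (u x) := by
  induction k with
  | zero => rfl
  | succ k ih => rw [Function.iterate_succ_apply', Function.iterate_succ_apply',
      h _ (hf.iterate k hx), ih]

theorem caseII_general (δ : ℝ) (hδ1 : 5 / 8 < δ) (hδ2 : δ < 3 / 4)
    (u : ℝ → ℝ)
    (humaps : Set.MapsTo u (Set.Icc (0 : ℝ) 1) (Set.Icc (0 : ℝ) 1))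
    (hucont : ContinuousOn u (Set.Icc (0 : ℝ) 1))
    (huconj : ∀ t ∈ Set.Icc (0 : ℝ) 1, u (gMap δ t) = Tmap (u t))
    (hud : ∀ t ∈ Set.Icc (0 : ℝ) 1, (u t = 1 - alphaRot ↔ t = 2 * (1 - δ)))
    (J : Set ℝ) (hJsub : J ⊆ Set.Icc (0 : ℝ) 1) (hJord : J.OrdConnected)
    (hlen : ∃ a ∈ u '' J, ∃ b ∈ u '' J, a < b) :
    ∃ k : ℕ, 2 * (1 - δ) ∈ (gMap δ)^[k] '' J := by
  obtain ⟨-, ⟨t₁, ht₁, rfl⟩, -, ⟨t₂, ht₂, rfl⟩, hlt⟩ := hlen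
  obtain ⟨_ | k, hn, hy⟩ := irrational_one_sub_alphaRot.exists_pos_nat_fract_mul_mem_Ioo
    (humaps (hJsub ht₁)).1 hlt (humaps (hJsub ht₂)).2
  · exact (lt_irrefl 0 hn).elim
  have hJ : uIcc t₁ t₂ ⊆ J := hJord.uIcc_subset ht₁ ht₂
  obtain ⟨s, hs, hsy⟩ := intermediate_value_uIcc (hucont.mono (hJ.trans hJsub))
    (Icc_subset_uIcc ⟨hy.1.le, hy.2.le⟩)
  have hTk : Tmap^[k] (u s) = 1 - alphaRot := by
    rw [hsy, Tmap_iterate_fract, show ((k + 1 : ℕ) : ℝ) * (1 - alphaRot) + k * alphaRot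
      = 1 - alphaRot + k by push_cast; ring, Int.fract_add_natCast,
      Int.fract_eq_self.2 ⟨by linarith [alphaRot_lt_one], by linarith [alphaRot_pos]⟩]
  have hg := mapsTo_gMap (δ := δ) (by linarith) (by linarith)
  have hsIcc := hJsub (hJ hs)
  refine ⟨k, s, hJ hs, (hud _ (hg.iterate k hsIcc)).1 ?_⟩
  rw [iterate_apply_of_semiconjOn hg huconj k hsIcc, hTk]

/-- Case II of Claim F: let `5/8 < δ < 3/4` and `d = 2(1−δ)`. Suppose
`u : [0,1] → [0,1]` is continuous, nondecreasing and surjective, satisfies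
`u ∘ g = T ∘ u`, and `u(t) = 1 − α` iff `t = d`. Then for every interval `J ⊆ [0,1]`
such that `u(J)` has positive length, there exists `k ≥ 0` with `d ∈ g^k(J)`. -/
theorem caseII (δ : ℝ) (hδ1 : 5 / 8 < δ) (hδ2 : δ < 3 / 4)
    (u : ℝ → ℝ)
    (humaps : Set.MapsTo u (Set.Icc (0 : ℝ) 1) (Set.Icc (0 : ℝ) 1))
    (hucont : ContinuousOn u (Set.Icc (0 : ℝ) 1))
    (humono : MonotoneOn u (Set.Icc (0 : ℝ) 1))
    (husurj : u '' Set.Icc (0 : ℝ) 1 = Set.Icc (0 : ℝ) 1)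
    (huconj : ∀ t ∈ Set.Icc (0 : ℝ) 1, u (gMap δ t) = Tmap (u t))
    (hud : ∀ t ∈ Set.Icc (0 : ℝ) 1, (u t = 1 - alphaRot ↔ t = 2 * (1 - δ)))
    (J : Set ℝ) (hJsub : J ⊆ Set.Icc (0 : ℝ) 1) (hJord : J.OrdConnected)
    (hlen : ∃ a ∈ u '' J, ∃ b ∈ u '' J, a < b) :
    ∃ k : ℕ, 2 * (1 - δ) ∈ (gMap δ)^[k] '' J :=
  caseII_general δ hδ1 hδ2 u humaps hucont huconj hud J hJsub hJord hlen
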